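/- arXiv:2406.09061 — 3 statements merged into one kernel-verified Lean document; each statement's English description precedes it below -/
import Mathlib

section
/- Let A ∈ ℝ^{n×n}, B ∈ ℝ^{n×m}, C ∈ ℝ^{p×n}, E ∈ ℝ^{n×q}, F ∈ ℝ^{p×s}, L ∈ ℝ^{n×p} be real matrices, let 𝒢 be a set of m×m real matrices, and let X̂ ⊆ ℝ^n, W ⊆ ℝ^q, V ⊆ ℝ^s be sets. Suppose x ∈ X̂, G ∈ 𝒢, ω ∈ W, η ∈ V, u ∈ ℝ^m, and define y = Cx + Fη and x⁺ = Ax + BGu + Eω. Then x⁺ ∈ (A − LC)·X̂ + { B G′ u : G′ ∈ 𝒢 } + { Ly } + E·W + (−LF)·V, where M·S denotes the image of the set S under the linear map given by matrix M and + denotes the Minkowski sum of sets in ℝ^n. -/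
open Matrix Pointwise

/-- one-step soundness of the set-valued observer:
the true successor state lies in the propagated observer set. -/
theorem stmt2 (n m p q s : ℕ)
    (A : Matrix (Fin n) (Fin n) ℝ) (B : Matrix (Fin n) (Fin m) ℝ)
    (C : Matrix (Fin p) (Fin n) ℝ) (E : Matrix (Fin n) (Fin q) ℝ)
    (F : Matrix (Fin p) (Fin s) ℝ) (L : Matrix (Fin n) (Fin p) ℝ)
    (𝒢 : Set (Matrix (Fin m) (Fin m) ℝ))
    (Xh : Set (Fin n → ℝ)) (W : Set (Fin q → ℝ)) (V : Set (Fin s → ℝ))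
    (x : Fin n → ℝ) (G : Matrix (Fin m) (Fin m) ℝ) (ω : Fin q → ℝ)
    (η : Fin s → ℝ) (u : Fin m → ℝ)
    (hx : x ∈ Xh) (hG : G ∈ 𝒢) (hω : ω ∈ W) (hη : η ∈ V)
    (y : Fin p → ℝ) (hy : y = C.mulVec x + F.mulVec η)
    (x' : Fin n → ℝ)
    (hx' : x' = A.mulVec x + B.mulVec (G.mulVec u) + E.mulVec ω) :
    x' ∈ ((A - L * C).mulVec '' Xh) +
          ((fun G' => B.mulVec (G'.mulVec u)) '' 𝒢) +
          {L.mulVec y} + (E.mulVec '' W) + ((-(L * F)).mulVec '' V) := by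
  have key : x' = (A - L * C).mulVec x + B.mulVec (G.mulVec u) +
      L.mulVec y + E.mulVec ω + (-(L * F)).mulVec η := by
    subst hy hx'
    simp [Matrix.sub_mulVec, Matrix.neg_mulVec, Matrix.mulVec_add, Matrix.mulVec_mulVec]
    abel
  rw [key]
  exact Set.add_mem_add (Set.add_mem_add (Set.add_mem_add (Set.add_mem_add
    (Set.mem_image_of_mem _ hx) (Set.mem_image_of_mem _ hG)) rfl)
    (Set.mem_image_of_mem _ hω)) (Set.mem_image_of_mem _ hη)
end

section
/- Let A ∈ ℝ^{n×n}, B ∈ ℝ^{n×m}, C ∈ ℝ^{p×n}, E ∈ ℝ^{n×q}, F ∈ ℝ^{p×s} be real matrices, 𝒢 a set of m×m real matrices, G ∈ 𝒢, and W ⊆ ℝ^q, V ⊆ ℝ^s sets. Let (u_k)_{k≥0} in ℝ^m, (ω_k)_{k≥0} with ω_k ∈ W, (η_k)_{k≥0} with η_k ∈ V, and (L_k)_{k≥0} in ℝ^{n×p} be arbitrary sequences. Define the system trajectory by x_{k+1} = A x_k + B G u_k + E ω_k and y_k = C x_k + F η_k, and define the observer sets recursively by X̂_{k+1} = (A − L_kC)·X̂_k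 + { B G′ u_k : G′ ∈ 𝒢 } + { L_k y_k } + E·W + (−L_kF)·V. If x₀ ∈ X̂₀, then for every k ≥ 0 one has x_k ∈ X̂_k and y_k ∈ C·X̂_k + F·V, where M·S denotes the image of the set S under the matrix M and + denotes Minkowski sum. -/
open Matrix Pointwise

/-- multi-step soundness of the set-valued observer: if
`x₀ ∈ X̂₀` then for all `k`, `x_k ∈ X̂_k` and `y_k ∈ C·X̂_k + F·V`. -/
theorem stmt3 (n m p q s : ℕ)
    (A : Matrix (Fin n) (Fin n) ℝ) (B : Matrix (Fin n) (Fin m) ℝ)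
    (C : Matrix (Fin p) (Fin n) ℝ) (E : Matrix (Fin n) (Fin q) ℝ)
    (F : Matrix (Fin p) (Fin s) ℝ)
    (𝒢 : Set (Matrix (Fin m) (Fin m) ℝ)) (G : Matrix (Fin m) (Fin m) ℝ)
    (hG : G ∈ 𝒢)
    (W : Set (Fin q → ℝ)) (V : Set (Fin s → ℝ))
    (u : ℕ → Fin m → ℝ)
    (ω : ℕ → Fin q → ℝ) (hω : ∀ k, ω k ∈ W)
    (η : ℕ → Fin s → ℝ) (hη : ∀ k, η k ∈ V)
    (L : ℕ → Matrix (Fin n) (Fin p) ℝ)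
    (x : ℕ → Fin n → ℝ)
    (hx : ∀ k, x (k + 1) = A.mulVec (x k) + B.mulVec (G.mulVec (u k)) +
      E.mulVec (ω k))
    (y : ℕ → Fin p → ℝ)
    (hy : ∀ k, y k = C.mulVec (x k) + F.mulVec (η k))
    (Xh : ℕ → Set (Fin n → ℝ))
    (hXh : ∀ k, Xh (k + 1) =
      ((A - L k * C).mulVec '' Xh k) +
      ((fun G' => B.mulVec (G'.mulVec (u k))) '' 𝒢) +
      {(L k).mulVec (y k)} + (E.mulVec '' W) + ((-(L k * F)).mulVec '' V))
    (h0 : x 0 ∈ Xh 0) :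
    ∀ k, x k ∈ Xh k ∧ y k ∈ (C.mulVec '' Xh k) + (F.mulVec '' V) := by
  have hxk : ∀ k, x k ∈ Xh k := by
    intro k
    induction k with
    | zero => exact h0
    | succ k ih =>
      rw [hXh k]
      have key : x (k+1) =
          (A - L k * C).mulVec (x k) + B.mulVec (G.mulVec (u k)) +
          (L k).mulVec (y k) + E.mulVec (ω k) + (-(L k * F)).mulVec (η k) := by
        rw [hx k, hy k]
        simp only [Matrix.sub_mulVec, Matrix.neg_mulVec, Matrix.mulVec_add,
          ← Matrix.mulVec_mulVec]
        abel
      rw [key]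
      exact Set.add_mem_add (Set.add_mem_add (Set.add_mem_add
        (Set.add_mem_add (Set.mem_image_of_mem _ ih)
          ⟨G, hG, rfl⟩) rfl) (Set.mem_image_of_mem _ (hω k)))
        (Set.mem_image_of_mem _ (hη k))
  intro k
  refine ⟨hxk k, ?_⟩
  rw [hy k]
  exact Set.add_mem_add (Set.mem_image_of_mem _ (hxk k))
    (Set.mem_image_of_mem _ (hη k))
end

section
/- Let A ∈ ℝ^{n×n}, C ∈ ℝ^{p×n}, L ∈ ℝ^{n×p}, Ĥ ∈ ℝ^{n×r}, and let V₀ ∈ ℝ^{p×t}, W₀ ∈ ℝ^{p×q}, N₀ ∈ ℝ^{p×s} be fixed real matrices. Define the block matrix H(L) = [ C(A − LC)Ĥ , V₀ , W₀ , −C L N₀ , N₀′ ] by horizontal concatenation, where N₀′ ∈ ℝ^{p×s} is a further fixed matrix. Then ‖H(L)‖_F² = vec(L)ᵀ [ (C Ĥ Ĥᵀ Cᵀ + N₀ N₀ᵀ) ⊗ (Cᵀ C) ] vec(L) − 2 ⟨ vec(Cᵀ C A Ĥ Ĥᵀ Cᵀ), vec(L) ⟩ + tr( C A Ĥ Ĥᵀ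 Aᵀ Cᵀ + V₀V₀ᵀ + W₀W₀ᵀ + N₀′(N₀′)ᵀ ), where ‖·‖_F is the Frobenius norm, tr is the trace, ⊗ is the Kronecker product, and vec is the column-stacking vectorization. -/
open Matrix Kronecker

/-- Column-stacking vectorization: `vecCS L (j, i) = L i j`. -/
def vecCS {n p : Type*} (L : Matrix n p ℝ) : p × n → ℝ := fun q => L q.2 q.1

/-- Squared Frobenius norm. -/
def frobSq {m n : Type*} [Fintype m] [Fintype n] (M : Matrix m n ℝ) : ℝ :=
  ∑ i, ∑ j, (M i j) ^ 2

/-!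
Everything reduces to the identity `vec (C L M) = (Mᵀ ⊗ C) vec L`: the gain `L` enters the
blocks `C(A - LC)Ĥ = CAĤ - CL(CĤ)` and `-CLN₀` only through maps of this form, so expanding
`‖X - CLM‖_F² = ‖X‖_F² - 2 ⟪vec X, (Mᵀ ⊗ C) vec L⟫ + ‖(Mᵀ ⊗ C) vec L‖_F²` and using
`(Mᵀ ⊗ C)ᵀ (Mᵀ ⊗ C) = MMᵀ ⊗ CᵀC` produces the quadratic and linear parts; the gain-independent
blocks contribute `‖X‖_F² = tr (X Xᵀ)`.
-/

theorem vecCS_eq_vec {n p : Type*} (L : Matrix n p ℝ) : vecCS L = vec L := rfl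

section Frobenius

variable {m n k : Type*} [Fintype m] [Fintype n]

theorem frobSq_eq_vec_dotProduct_vec (M : Matrix m n ℝ) : frobSq M = vec M ⬝ᵥ vec M := by
  simp only [frobSq, dotProduct, vec, Fintype.sum_prod_type, sq]
  exact Finset.sum_comm

theorem frobSq_eq_trace_mul_transpose (M : Matrix m n ℝ) : frobSq M = trace (M * Mᵀ) := by
  rw [frobSq_eq_vec_dotProduct_vec, vec_dotProduct_vec, trace_mul_comm]

theorem frobSq_fromCols [Fintype k] (A : Matrix m n ℝ) (B : Matrix m k ℝ) :
    frobSq (fromCols A B) = frobSq A + frobSq B := by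
  simp only [frobSq, Finset.sum_add_distrib, Fintype.sum_sum_type, fromCols_apply_inl,
    fromCols_apply_inr]

theorem frobSq_neg (M : Matrix m n ℝ) : frobSq (-M) = frobSq M := by
  simp only [frobSq, Matrix.neg_apply, neg_sq]

theorem frobSq_sub (X Y : Matrix m n ℝ) :
    frobSq (X - Y) = frobSq X - 2 * (vec X ⬝ᵥ vec Y) + frobSq Y := by
  simp only [frobSq_eq_vec_dotProduct_vec, vec_sub, sub_dotProduct, dotProduct_sub,
    dotProduct_comm (vec Y) (vec X)]
  ring

end Frobenius

section KroneckerVec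

variable {m n p r : Type*} [Fintype n] [Fintype p]

theorem vec_mul_mul (C : Matrix m n ℝ) (L : Matrix n p ℝ) (M : Matrix p r ℝ) :
    vec (C * L * M) = (Mᵀ ⊗ₖ C) *ᵥ vec L := by
  rw [kronecker_mulVec_vec, transpose_transpose]

theorem frobSq_mul_mul [Fintype m] [Fintype r] (C : Matrix m n ℝ) (L : Matrix n p ℝ)
    (M : Matrix p r ℝ) :
    frobSq (C * L * M) = vec L ⬝ᵥ ((M * Mᵀ) ⊗ₖ (Cᵀ * C)) *ᵥ vec L := by
  rw [frobSq_eq_vec_dotProduct_vec, vec_mul_mul, dotProduct_mulVec, ← mulVec_transpose,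
    dotProduct_comm, mulVec_mulVec, ← kroneckerMap_transpose, transpose_transpose,
    ← mul_kronecker_mul]

theorem vec_dotProduct_vec_mul_mul [Fintype m] [Fintype r] (X : Matrix m r ℝ)
    (C : Matrix m n ℝ) (L : Matrix n p ℝ) (M : Matrix p r ℝ) :
    vec X ⬝ᵥ vec (C * L * M) = vec (Cᵀ * X * Mᵀ) ⬝ᵥ vec L := by
  rw [vec_mul_mul, dotProduct_mulVec, vec_vecMul_kronecker]

end KroneckerVec

/-- Frobenius-norm size of the residual-zonotope generator
matrix `H(L) = [C(A-LC)Hh, V₀, W₀, -CLN₀, N₀′]` as a quadratic function of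
`vec(L)`. -/
theorem stmt9 (n p r t q s : ℕ)
    (A : Matrix (Fin n) (Fin n) ℝ) (C : Matrix (Fin p) (Fin n) ℝ)
    (L : Matrix (Fin n) (Fin p) ℝ) (Hh : Matrix (Fin n) (Fin r) ℝ)
    (V₀ : Matrix (Fin p) (Fin t) ℝ) (W₀ : Matrix (Fin p) (Fin q) ℝ)
    (N₀ N₀' : Matrix (Fin p) (Fin s) ℝ) :
    frobSq (Matrix.fromCols (Matrix.fromCols (Matrix.fromCols
        (Matrix.fromCols (C * (A - L * C) * Hh) V₀) W₀) (-(C * L * N₀))) N₀') =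
      vecCS L ⬝ᵥ (((C * Hh * Hhᵀ * Cᵀ + N₀ * N₀ᵀ) ⊗ₖ (Cᵀ * C)).mulVec (vecCS L))
      - 2 * (vecCS (Cᵀ * C * A * Hh * Hhᵀ * Cᵀ) ⬝ᵥ vecCS L)
      + Matrix.trace (C * A * Hh * Hhᵀ * Aᵀ * Cᵀ + V₀ * V₀ᵀ + W₀ * W₀ᵀ
          + N₀' * N₀'ᵀ) := by
  have hfirst : C * (A - L * C) * Hh = C * A * Hh - C * L * (C * Hh) := by
    simp only [Matrix.mul_sub, Matrix.sub_mul, Matrix.mul_assoc]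
  rw [frobSq_fromCols, frobSq_fromCols, frobSq_fromCols, frobSq_fromCols, frobSq_neg, hfirst,
    frobSq_sub, vec_dotProduct_vec_mul_mul, frobSq_mul_mul C L (C * Hh), frobSq_mul_mul C L N₀,
    frobSq_eq_trace_mul_transpose (C * A * Hh), frobSq_eq_trace_mul_transpose V₀,
    frobSq_eq_trace_mul_transpose W₀, frobSq_eq_trace_mul_transpose N₀']
  simp only [vecCS_eq_vec, add_kronecker, add_mulVec, dotProduct_add, trace_add, transpose_mul,
    Matrix.mul_assoc]
  ring
end
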